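/- Suppose (u_h, v_h, q_h) solves the conservative semi-discrete LDG Scheme C1 on [0,T]. Then for every t ∈ [0,T]: (d/dt) ∫_a^b u_h(t,x) dx = 0 (conservation of mass E₀) and (d/dt) ∫_a^b u_h(t,x)² dx = 0 (conservation of energy E₂). -/

import Mathlib

/-
Testing (i) with `φ = 1`, the flux term telescopes and, by (ii), `(v, 1)` is a sum of central-flux
forms `L^c(·, 1)`, which also telescope; hence `(∂ₜu, 1) = 0`. Testing (i) with `φ = u`, the
conservative flux satisfies `f̂(c, d) (c - d) = F(c) - F(d)`, so `N^c(u, u)` telescopes; the central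
form `L^c` is skew-symmetric, and (ii), (iii) give `(v, u) = L^c(q, u) = -L^c(u, q) = -(v, q)
= -(q, v) = -L^c(v, v) = 0`; hence `(∂ₜu, u) = 0`. Since every cell integral is a finite linear
(resp. quadratic) combination of polynomial coefficients, these identities are the time
derivatives of the mass and of the energy.
-/

open Polynomial Set

noncomputable section

namespace FW

variable {N : ℕ}

/-- Minus trace `ω⁻` at interface `j+1/2` (right end of cell `j`). -/
def trM (x : Fin (N + 1) → ℝ) (ω : Fin N → Polynomial ℝ) (j : Fin N) : ℝ :=
  (ω j).eval (x j.succ)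

/-- Plus trace `ω⁺` at interface `j+1/2` (left end of the next cell, cyclically). -/
def trP [NeZero N] (x : Fin (N + 1) → ℝ) (ω : Fin N → Polynomial ℝ) (j : Fin N) : ℝ :=
  (ω (j + 1)).eval (x (j + 1).castSucc)

/-- Average trace `{ω}`. -/
def trA [NeZero N] (x : Fin (N + 1) → ℝ) (ω : Fin N → Polynomial ℝ) (j : Fin N) : ℝ :=
  (trP x ω j + trM x ω j) / 2

/-- Jump `[ω]`. -/
def jmp [NeZero N] (x : Fin (N + 1) → ℝ) (ω : Fin N → Polynomial ℝ) (j : Fin N) : ℝ :=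
  trP x ω j - trM x ω j

/-- Cell L² pairing `(u, φ)_{I_j}` of a piecewise polynomial with a test polynomial. -/
def ipj (x : Fin (N + 1) → ℝ) (u : Fin N → Polynomial ℝ) (j : Fin N) (φ : Polynomial ℝ) : ℝ :=
  ∫ t in (x j.castSucc)..(x j.succ), (u j).eval t * φ.eval t

/-- Cell pairing `(f∘u, φ)_{I_j}`. -/
def ipfj (x : Fin (N + 1) → ℝ) (f : ℝ → ℝ) (u : Fin N → Polynomial ℝ) (j : Fin N)
    (φ : Polynomial ℝ) : ℝ :=
  ∫ t in (x j.castSucc)..(x j.succ), f ((u j).eval t) * φ.eval t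

/-- Boundary pairing `⟨g, φ⟩_{I_j}` for interface values `g`. -/
def bdj [NeZero N] (x : Fin (N + 1) → ℝ) (g : Fin N → ℝ) (j : Fin N) (φ : Polynomial ℝ) : ℝ :=
  g j * φ.eval (x j.succ) - g (j - 1) * φ.eval (x j.castSucc)

/-- Membership in the space `V_h^k` of piecewise polynomials of degree at most `k`. -/
def memV (k : ℕ) (ω : Fin N → Polynomial ℝ) : Prop :=
  ∀ j, (ω j).degree ≤ (k : WithBot ℕ)

/-- `L⁻(ω, φ)`. -/
def Lm [NeZero N] (x : Fin (N + 1) → ℝ) (ω φ : Fin N → Polynomial ℝ) : ℝ :=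
  ∑ j, (-(ipj x ω j (derivative (φ j))) + bdj x (trM x ω) j (φ j))

/-- `L⁺(ω, φ)`. -/
def Lp [NeZero N] (x : Fin (N + 1) → ℝ) (ω φ : Fin N → Polynomial ℝ) : ℝ :=
  ∑ j, (-(ipj x ω j (derivative (φ j))) + bdj x (trP x ω) j (φ j))

/-- `L^c(ω, φ)`. -/
def Lc [NeZero N] (x : Fin (N + 1) → ℝ) (ω φ : Fin N → Polynomial ℝ) : ℝ :=
  ∑ j, (-(ipj x ω j (derivative (φ j))) + bdj x (trA x ω) j (φ j))

/-- Godunov numerical flux. -/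
def godunov (f : ℝ → ℝ) (c d : ℝ) : ℝ :=
  if c < d then sInf (f '' Set.Icc c d) else sSup (f '' Set.Icc d c)

/-- Conservative numerical flux for `f(u) = u^p/p`, `F(u) = u^(p+1)/(p(p+1))`. -/
def consFlux (p : ℕ) (c d : ℝ) : ℝ :=
  if c = d then c ^ p / (p : ℝ)
  else (d ^ (p + 1) / ((p : ℝ) * ((p : ℝ) + 1)) - c ^ (p + 1) / ((p : ℝ) * ((p : ℝ) + 1))) / (d - c)

/-- Dissipative (Godunov-flux) nonlinear form `N^d`. -/
def Nd [NeZero N] (x : Fin (N + 1) → ℝ) (f : ℝ → ℝ) (ω φ : Fin N → Polynomial ℝ) : ℝ :=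
  ∑ j, (-(ipfj x f ω j (derivative (φ j)))
    + bdj x (fun i => godunov f (trM x ω i) (trP x ω i)) j (φ j))

/-- Conservative-flux nonlinear form `N^c`. -/
def Nc [NeZero N] (x : Fin (N + 1) → ℝ) (p : ℕ) (ω φ : Fin N → Polynomial ℝ) : ℝ :=
  ∑ j, (-(ipfj x (fun w => w ^ p / (p : ℝ)) ω j (derivative (φ j)))
    + bdj x (fun i => consFlux p (trM x ω i) (trP x ω i)) j (φ j))

end FW

open intervalIntegral

theorem sum_sub_comp_sub_eq_zero {G M : Type*} [AddGroup G] [Fintype G] [AddCommGroup M]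
    (g : G → M) (a : G) : ∑ j, (g j - g (j - a)) = 0 := by
  rw [Finset.sum_sub_distrib, sub_eq_zero]
  exact (Fintype.sum_equiv (Equiv.subRight a) _ _ fun _ => rfl).symm

section PolynomialIntegral

variable {n : ℕ} {c d : ℝ}

theorem integral_eval_eq_sum_range {P : ℝ[X]} (hP : P.degree ≤ n) :
    ∫ y in c..d, P.eval y = ∑ m ∈ Finset.range (n + 1), P.coeff m * ∫ y in c..d, y ^ m := by
  have hPn : P.natDegree < n + 1 := Nat.lt_succ_of_le (natDegree_le_iff_degree_le.2 hP)
  simp_rw [eval_eq_sum_range' hPn]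
  rw [integral_finsetSum (f := fun m y => P.coeff m * y ^ m) fun m _ =>
    (continuous_const.mul (continuous_pow m)).intervalIntegrable c d]
  simp_rw [integral_const_mul]

theorem hasDerivWithinAt_integral_eval {s : Set ℝ} {t : ℝ} {P : ℝ → ℝ[X]} {P' : ℝ[X]}
    (hP : ∀ σ ∈ s, (P σ).degree ≤ n) (hP' : P'.degree ≤ n) (ht : t ∈ s)
    (hd : ∀ m, HasDerivWithinAt (fun σ => (P σ).coeff m) (P'.coeff m) s t) :
    HasDerivWithinAt (fun σ => ∫ y in c..d, (P σ).eval y) (∫ y in c..d, P'.eval y) s t := by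
  rw [integral_eval_eq_sum_range hP']
  exact (HasDerivWithinAt.fun_sum fun m _ => (hd m).mul_const _).congr
    (fun σ hσ => integral_eval_eq_sum_range (hP σ hσ)) (integral_eval_eq_sum_range (hP t ht))

theorem hasDerivWithinAt_coeff_mul {s : Set ℝ} {t : ℝ} {P Q : ℝ → ℝ[X]} {P' Q' : ℝ[X]}
    (hPd : ∀ m, HasDerivWithinAt (fun σ => (P σ).coeff m) (P'.coeff m) s t)
    (hQd : ∀ m, HasDerivWithinAt (fun σ => (Q σ).coeff m) (Q'.coeff m) s t) (m : ℕ) :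
    HasDerivWithinAt (fun σ => (P σ * Q σ).coeff m) ((P' * Q t + P t * Q').coeff m) s t := by
  simp_rw [coeff_add, coeff_mul, ← Finset.sum_add_distrib]
  exact HasDerivWithinAt.fun_sum fun i _ => (hPd i.1).mul (hQd i.2)

theorem hasDerivWithinAt_integral_eval_sq {s : Set ℝ} {t : ℝ} {P : ℝ → ℝ[X]} {P' : ℝ[X]}
    (hP : ∀ σ ∈ s, (P σ).degree ≤ n) (hP' : P'.degree ≤ n) (ht : t ∈ s)
    (hd : ∀ m, HasDerivWithinAt (fun σ => (P σ).coeff m) (P'.coeff m) s t) :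
    HasDerivWithinAt (fun σ => ∫ y in c..d, (P σ).eval y ^ 2)
      (2 * ∫ y in c..d, P'.eval y * (P t).eval y) s t := by
  have hdeg2 : ∀ A B : ℝ[X], A.degree ≤ n → B.degree ≤ n → (A * B).degree ≤ ↑(n + n) :=
    fun A B hA hB => degree_mul_le_of_le hA hB |>.trans_eq (by push_cast; rfl)
  have h := hasDerivWithinAt_integral_eval (c := c) (d := d)
    (fun σ hσ => hdeg2 _ _ (hP σ hσ) (hP σ hσ))
    (degree_add_le_of_degree_le (hdeg2 _ _ hP' (hP t ht)) (hdeg2 _ _ (hP t ht) hP')) ht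
    (hasDerivWithinAt_coeff_mul hd hd)
  have hsum : ∫ y in c..d, (P'.eval y * (P t).eval y + (P t).eval y * P'.eval y)
      = 2 * ∫ y in c..d, P'.eval y * (P t).eval y := by
    rw [← integral_const_mul]
    exact integral_congr fun y _ => by ring
  simpa only [eval_mul, eval_add, hsum, sq] using h

end PolynomialIntegral

namespace FW

/-- The paper's `F`. -/
def fluxPotential (p : ℕ) (w : ℝ) : ℝ :=
  w ^ (p + 1) / ((p : ℝ) * ((p : ℝ) + 1))

theorem hasDerivAt_fluxPotential (p : ℕ) (w : ℝ) :
    HasDerivAt (fluxPotential p) (w ^ p / (p : ℝ)) w := by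
  have h := (hasDerivAt_pow (p + 1) w).div_const ((p : ℝ) * ((p : ℝ) + 1))
  refine h.congr_deriv ?_
  rw [Nat.add_sub_cancel, Nat.cast_add_one, mul_comm (p : ℝ),
    mul_div_mul_left _ _ (by positivity : (p : ℝ) + 1 ≠ 0)]

theorem consFlux_mul_sub (p : ℕ) (c d : ℝ) :
    consFlux p c d * (c - d) = fluxPotential p c - fluxPotential p d := by
  unfold consFlux fluxPotential
  split_ifs with h
  · simp [h]
  · field_simp [sub_ne_zero.mpr (Ne.symm h)]
    ring

theorem integral_eval_pow_div_mul_derivative (p : ℕ) (P : ℝ[X]) (c d : ℝ) :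
    ∫ y in c..d, P.eval y ^ p / (p : ℝ) * (derivative P).eval y
      = fluxPotential p (P.eval d) - fluxPotential p (P.eval c) :=
  integral_eq_sub_of_hasDerivAt
    (fun y _ => (hasDerivAt_fluxPotential p (P.eval y)).comp y (P.hasDerivAt y))
    ((((P.continuous.pow p).div_const _).mul (derivative P).continuous).intervalIntegrable c d)

theorem ipj_comm {N : ℕ} (x : Fin (N + 1) → ℝ) (ω φ : Fin N → ℝ[X]) (j : Fin N) :
    ipj x ω j (φ j) = ipj x φ j (ω j) :=
  integral_congr fun _ _ => mul_comm _ _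

variable {N : ℕ} [NeZero N] (x : Fin (N + 1) → ℝ)

theorem trP_sub_one (ω : Fin N → ℝ[X]) (j : Fin N) :
    trP x ω (j - 1) = (ω j).eval (x j.castSucc) := by
  rw [trP, sub_add_cancel]

theorem bdj_eq_trM_sub_trP (g : Fin N → ℝ) (φ : Fin N → ℝ[X]) (j : Fin N) :
    bdj x g j (φ j) = g j * trM x φ j - g (j - 1) * trP x φ (j - 1) := by
  rw [bdj, trM, trP_sub_one]

theorem sum_bdj_one (g : Fin N → ℝ) : ∑ j, bdj x g j 1 = 0 := by
  simpa [bdj] using sum_sub_comp_sub_eq_zero g 1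

theorem ipj_derivative_add_ipj_derivative (ω φ : Fin N → ℝ[X]) (j : Fin N) :
    ipj x ω j (derivative (φ j)) + ipj x φ j (derivative (ω j))
      = trM x ω j * trM x φ j - trP x ω (j - 1) * trP x φ (j - 1) := by
  have h := integral_deriv_mul_eq_sub (a := x j.castSucc) (b := x j.succ)
    (fun y _ => (ω j).hasDerivAt y) (fun y _ => (φ j).hasDerivAt y)
    ((derivative (ω j)).continuous.intervalIntegrable _ _)
    ((derivative (φ j)).continuous.intervalIntegrable _ _)
  rw [ipj, ipj, ← integral_add, trM, trM, trP_sub_one, trP_sub_one, ← h]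
  · exact integral_congr fun y _ => by ring
  all_goals exact (Continuous.intervalIntegrable (by fun_prop) _ _)

theorem Lc_one (ω : Fin N → ℝ[X]) : Lc x ω (fun _ => 1) = 0 := by
  simp [Lc, ipj, sum_bdj_one]

theorem Nc_one (p : ℕ) (ω : Fin N → ℝ[X]) : Nc x p ω (fun _ => 1) = 0 := by
  simp [Nc, ipfj, sum_bdj_one]

theorem Lc_add_Lc_swap (ω φ : Fin N → ℝ[X]) : Lc x ω φ + Lc x φ ω = 0 := by
  let G : Fin N → ℝ := fun i => (trM x ω i * trP x φ i + trM x φ i * trP x ω i) / 2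
  rw [Lc, Lc, ← Finset.sum_add_distrib, ← sum_sub_comp_sub_eq_zero G 1]
  refine Finset.sum_congr rfl fun j _ => ?_
  rw [bdj_eq_trM_sub_trP, bdj_eq_trM_sub_trP]
  simp only [G, trA]
  linear_combination -ipj_derivative_add_ipj_derivative x ω φ j

/-- The conservative flux makes `N^c(ω, ω)` telescope, with interface potential `f̂ ω⁺ - F(ω⁺)`. -/
theorem Nc_self (p : ℕ) (ω : Fin N → ℝ[X]) : Nc x p ω ω = 0 := by
  let fh : Fin N → ℝ := fun i => consFlux p (trM x ω i) (trP x ω i)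
  let G : Fin N → ℝ := fun i => fh i * trP x ω i - fluxPotential p (trP x ω i)
  rw [Nc, ← sum_sub_comp_sub_eq_zero G 1]
  refine Finset.sum_congr rfl fun j _ => ?_
  have hF : ipfj x (fun w => w ^ p / (p : ℝ)) ω j (derivative (ω j))
      = fluxPotential p (trM x ω j) - fluxPotential p (trP x ω (j - 1)) := by
    rw [ipfj, trM, trP_sub_one]
    exact integral_eval_pow_div_mul_derivative p (ω j) _ _
  rw [hF, bdj_eq_trM_sub_trP]
  simp only [G, fh]
  linear_combination consFlux_mul_sub p (trM x ω j) (trP x ω j)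

section SchemeC1

variable (k p : ℕ) (u u' v q : Fin N → ℝ[X])

def C1EqI : Prop :=
  ∀ j, ∀ φ : ℝ[X], φ.degree ≤ k →
    ipj x u' j φ + bdj x (fun i => consFlux p (trM x u i) (trP x u i)) j φ
      - ipfj x (fun w => w ^ p / (p : ℝ)) u j (derivative φ) + ipj x v j φ = 0

def C1EqII : Prop :=
  ∀ j, ∀ φ : ℝ[X], φ.degree ≤ k →
    ipj x v j φ - bdj x (trA x q) j φ + ipj x q j (derivative φ)
      = bdj x (trA x u) j φ - ipj x u j (derivative φ)

def C1EqIII : Prop :=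
  ∀ j, ∀ φ : ℝ[X], φ.degree ≤ k →
    ipj x q j φ = bdj x (trA x v) j φ - ipj x v j (derivative φ)

variable {x k p u u' v q} {ψ : Fin N → ℝ[X]}

theorem C1EqI.sum_ipj_add_Nc_add_sum_ipj (h1 : C1EqI x k p u u' v) (hψ : memV k ψ) :
    ∑ j, ipj x u' j (ψ j) + Nc x p u ψ + ∑ j, ipj x v j (ψ j) = 0 := by
  rw [Nc, ← Finset.sum_add_distrib, ← Finset.sum_add_distrib]
  exact Finset.sum_eq_zero fun j _ => by linarith [h1 j (ψ j) (hψ j)]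

theorem C1EqII.sum_ipj_eq_Lc_add_Lc (h2 : C1EqII x k u v q) (hψ : memV k ψ) :
    ∑ j, ipj x v j (ψ j) = Lc x q ψ + Lc x u ψ := by
  rw [Lc, Lc, ← Finset.sum_add_distrib]
  exact Finset.sum_congr rfl fun j _ => by linarith [h2 j (ψ j) (hψ j)]

theorem C1EqIII.sum_ipj_eq_Lc (h3 : C1EqIII x k v q) (hψ : memV k ψ) :
    ∑ j, ipj x q j (ψ j) = Lc x v ψ := by
  rw [Lc]
  exact Finset.sum_congr rfl fun j _ => by linarith [h3 j (ψ j) (hψ j)]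

theorem sum_ipj_one_eq_zero (h1 : C1EqI x k p u u' v) (h2 : C1EqII x k u v q) :
    ∑ j, ipj x u' j 1 = 0 := by
  have hone : memV k (fun _ : Fin N => (1 : ℝ[X])) := fun _ =>
    degree_one_le.trans (WithBot.coe_le_coe.mpr k.zero_le)
  have hv := h2.sum_ipj_eq_Lc_add_Lc hone
  have hu' := h1.sum_ipj_add_Nc_add_sum_ipj hone
  rw [Lc_one, Lc_one] at hv
  rw [Nc_one] at hu'
  linarith

theorem sum_ipj_self_eq_zero (h1 : C1EqI x k p u u' v) (h2 : C1EqII x k u v q)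
    (h3 : C1EqIII x k v q) (hu : memV k u) (hv : memV k v) (hq : memV k q) :
    ∑ j, ipj x u' j (u j) = 0 := by
  have hvu := h2.sum_ipj_eq_Lc_add_Lc hu
  have hvq := h2.sum_ipj_eq_Lc_add_Lc hq
  have hqv := h3.sum_ipj_eq_Lc hv
  have hsymm : ∑ j, ipj x v j (q j) = ∑ j, ipj x q j (v j) :=
    Finset.sum_congr rfl fun j _ => ipj_comm x v q j
  have hu' := h1.sum_ipj_add_Nc_add_sum_ipj hu
  rw [Nc_self] at hu'
  linarith [Lc_add_Lc_swap x u u, Lc_add_Lc_swap x q q, Lc_add_Lc_swap x v v,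
    Lc_add_Lc_swap x u q]

end SchemeC1

end FW

theorem stmt10_general {N : ℕ} [NeZero N]
    (x : Fin (N + 1) → ℝ)
    (k : ℕ) (p : ℕ) (T : ℝ)
    (u u' v q : ℝ → Fin N → Polynomial ℝ)
    (hdeg : ∀ t ∈ Set.Icc (0:ℝ) T,
      FW.memV k (u t) ∧ FW.memV k (u' t) ∧ FW.memV k (v t) ∧ FW.memV k (q t))
    (hder : ∀ t ∈ Set.Icc (0:ℝ) T, ∀ (j : Fin N) (m : ℕ),
      HasDerivWithinAt (fun σ => (u σ j).coeff m) ((u' t j).coeff m) (Set.Icc (0:ℝ) T) t)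
    (heq1 : ∀ t ∈ Set.Icc (0:ℝ) T, ∀ (j : Fin N), ∀ φ : Polynomial ℝ,
      φ.degree ≤ (k : WithBot ℕ) →
      FW.ipj x (u' t) j φ
        + FW.bdj x (fun i => FW.consFlux p (FW.trM x (u t) i) (FW.trP x (u t) i)) j φ
        - FW.ipfj x (fun w => w ^ p / (p : ℝ)) (u t) j (Polynomial.derivative φ)
        + FW.ipj x (v t) j φ = 0)
    (heq2 : ∀ t ∈ Set.Icc (0:ℝ) T, ∀ (j : Fin N), ∀ φ : Polynomial ℝ,
      φ.degree ≤ (k : WithBot ℕ) →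
      FW.ipj x (v t) j φ - FW.bdj x (FW.trA x (q t)) j φ
          + FW.ipj x (q t) j (Polynomial.derivative φ)
        = FW.bdj x (FW.trA x (u t)) j φ - FW.ipj x (u t) j (Polynomial.derivative φ))
    (heq3 : ∀ t ∈ Set.Icc (0:ℝ) T, ∀ (j : Fin N), ∀ φ : Polynomial ℝ,
      φ.degree ≤ (k : WithBot ℕ) →
      FW.ipj x (q t) j φ
        = FW.bdj x (FW.trA x (v t)) j φ - FW.ipj x (v t) j (Polynomial.derivative φ)) :
    (∀ t ∈ Set.Icc (0:ℝ) T,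
      HasDerivWithinAt (fun σ => ∑ j : Fin N, ∫ y in (x j.castSucc)..(x j.succ), (u σ j).eval y) 0 (Set.Icc (0:ℝ) T) t)
    ∧ (∀ t ∈ Set.Icc (0:ℝ) T,
      HasDerivWithinAt (fun σ => ∑ j : Fin N, ∫ y in (x j.castSucc)..(x j.succ), ((u σ j).eval y) ^ 2) 0 (Set.Icc (0:ℝ) T) t) := by
  refine ⟨fun t ht => ?_, fun t ht => ?_⟩
  · have hmass := FW.sum_ipj_one_eq_zero (heq1 t ht) (heq2 t ht)
    simp only [FW.ipj, eval_one, mul_one] at hmass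
    have h := HasDerivWithinAt.fun_sum fun j (_ : j ∈ Finset.univ) =>
      hasDerivWithinAt_integral_eval (c := x j.castSucc) (d := x j.succ) (fun σ hσ => (hdeg σ hσ).1 j)
        ((hdeg t ht).2.1 j) ht (hder t ht j)
    rwa [hmass] at h
  · obtain ⟨hu, -, hv, hq⟩ := hdeg t ht
    have henergy := FW.sum_ipj_self_eq_zero (heq1 t ht) (heq2 t ht) (heq3 t ht) hu hv hq
    have h := HasDerivWithinAt.fun_sum fun j (_ : j ∈ Finset.univ) =>
      hasDerivWithinAt_integral_eval_sq (c := x j.castSucc) (d := x j.succ) (fun σ hσ => (hdeg σ hσ).1 j)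
        ((hdeg t ht).2.1 j) ht (hder t ht j)
    rwa [← Finset.mul_sum, show ∑ j, ∫ y in x j.castSucc..x j.succ, (u' t j).eval y * (u t j).eval y
      = 0 from henergy, mul_zero] at h

theorem stmt10 {N : ℕ} [NeZero N] (hN : 1 ≤ N) (a b : ℝ) (hab : a < b)
    (x : Fin (N + 1) → ℝ) (hx : StrictMono x) (hxa : x 0 = a) (hxb : x (Fin.last N) = b)
    (k : ℕ) (p : ℕ) (hp : 2 ≤ p) (T : ℝ) (hT : 0 < T)
    (u u' v q : ℝ → Fin N → Polynomial ℝ)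
    (hdeg : ∀ t ∈ Set.Icc (0:ℝ) T,
      FW.memV k (u t) ∧ FW.memV k (u' t) ∧ FW.memV k (v t) ∧ FW.memV k (q t))
    (hder : ∀ t ∈ Set.Icc (0:ℝ) T, ∀ (j : Fin N) (m : ℕ),
      HasDerivWithinAt (fun σ => (u σ j).coeff m) ((u' t j).coeff m) (Set.Icc (0:ℝ) T) t)
    (heq1 : ∀ t ∈ Set.Icc (0:ℝ) T, ∀ (j : Fin N), ∀ φ : Polynomial ℝ,
      φ.degree ≤ (k : WithBot ℕ) →
      FW.ipj x (u' t) j φ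
        + FW.bdj x (fun i => FW.consFlux p (FW.trM x (u t) i) (FW.trP x (u t) i)) j φ
        - FW.ipfj x (fun w => w ^ p / (p : ℝ)) (u t) j (Polynomial.derivative φ)
        + FW.ipj x (v t) j φ = 0)
    (heq2 : ∀ t ∈ Set.Icc (0:ℝ) T, ∀ (j : Fin N), ∀ φ : Polynomial ℝ,
      φ.degree ≤ (k : WithBot ℕ) →
      FW.ipj x (v t) j φ - FW.bdj x (FW.trA x (q t)) j φ
          + FW.ipj x (q t) j (Polynomial.derivative φ)
        = FW.bdj x (FW.trA x (u t)) j φ - FW.ipj x (u t) j (Polynomial.derivative φ))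
    (heq3 : ∀ t ∈ Set.Icc (0:ℝ) T, ∀ (j : Fin N), ∀ φ : Polynomial ℝ,
      φ.degree ≤ (k : WithBot ℕ) →
      FW.ipj x (q t) j φ
        = FW.bdj x (FW.trA x (v t)) j φ - FW.ipj x (v t) j (Polynomial.derivative φ)) :
    (∀ t ∈ Set.Icc (0:ℝ) T,
      HasDerivWithinAt (fun σ => ∑ j : Fin N, ∫ y in (x j.castSucc)..(x j.succ), (u σ j).eval y) 0 (Set.Icc (0:ℝ) T) t)
    ∧ (∀ t ∈ Set.Icc (0:ℝ) T,
      HasDerivWithinAt (fun σ => ∑ j : Fin N, ∫ y in (x j.castSucc)..(x j.succ), ((u σ j).eval y) ^ 2) 0 (Set.Icc (0:ℝ) T) t) :=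
  stmt10_general x k p T u u' v q hdeg hder heq1 heq2 heq3
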